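/- (Strichartz-type pair of Grand Lebesgue spaces for the Poisson semigroup, the case α = 1 of the fractional diffusion estimate.) Let 1 ≤ a₁ < b₁ ≤ a₂ < b₂ ≤ ∞, let ψ ∈ Ψ(a₁,b₁) and ν ∈ Ψ(a₂,b₂). Then there is a finite constant C = C(d, ψ, ν) such that for every t > 2 and every measurable f : ℝ^d → ℝ: ‖P_t * f‖_{G(ν)} · ( sup_{p∈(a₁,b₁)} t^{d/p}/ψ(p) ) ≤ C · ‖f‖_{G(ψ)} · ( sup_{r∈(a₂,b₂)} t^{d/r}/ν(r) ). (The two suprema are the fundamental functions φ(G(ψ), t^{d}) and φ(G(ν), t^{d}).) -/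

import Mathlib

open MeasureTheory Real ENNReal

/-- The Poisson kernel on `ℝ^d`:
`P_t(x) = (Γ((d+1)/2)/π^{(d+1)/2}) · t/(t² + ‖x‖²)^{(d+1)/2}`. -/
noncomputable def poissonKernelEucl (d : ℕ) (t : ℝ) : EuclideanSpace ℝ (Fin d) → ℝ :=
  fun x => Real.Gamma (((d : ℝ) + 1) / 2) / Real.pi ^ (((d : ℝ) + 1) / 2)
    * t / (t ^ 2 + ‖x‖ ^ 2) ^ (((d : ℝ) + 1) / 2)

/-- Convolution with the Poisson kernel: the semigroup `S₁(t) f = P_t * f` solving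
`∂_t u + (-Δ)^{1/2} u = 0`. -/
noncomputable def poissonProp (d : ℕ) (t : ℝ) (f : EuclideanSpace ℝ (Fin d) → ℝ) :
    EuclideanSpace ℝ (Fin d) → ℝ :=
  fun x => ∫ y : EuclideanSpace ℝ (Fin d), poissonKernelEucl d t (x - y) * f y

/-- The interval `(a,b)` of exponents, where `b` may be `∞`. -/
def glSet (a : ℝ) (b : ℝ≥0∞) : Set ℝ := {p : ℝ | a < p ∧ ENNReal.ofReal p < b}

/-- The Grand Lebesgue norm `‖f‖_{G(ψ)} = sup_{p ∈ S} |f|_p / ψ(p)`, in `[0,∞]`. -/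
noncomputable def glNorm (d : ℕ) (S : Set ℝ) (ψ : ℝ → ℝ)
    (f : EuclideanSpace ℝ (Fin d) → ℝ) : ℝ≥0∞ :=
  ⨆ p ∈ S, eLpNorm f (ENNReal.ofReal p) volume / ENNReal.ofReal (ψ p)

lemma aux_holder3 {α : Type*} [MeasurableSpace α] {μ : Measure α}
    {F G H : α → ℝ≥0∞} (hF : AEMeasurable F μ) (hG : AEMeasurable G μ)
    (hH : AEMeasurable H μ) {a b c : ℝ} (ha : 1 < a) (hb : 1 < b) (hc : 1 < c)
    (habc : 1/a + 1/b + 1/c = 1) :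
    ∫⁻ x, F x * G x * H x ∂μ ≤
      (∫⁻ x, F x ^ a ∂μ) ^ (1/a) * (∫⁻ x, G x ^ b ∂μ) ^ (1/b)
        * (∫⁻ x, H x ^ c ∂μ) ^ (1/c) := by
  have hb0 : (0:ℝ) < b := lt_trans one_pos hb
  have hc0 : (0:ℝ) < c := lt_trans one_pos hc
  set e : ℝ := (1/b + 1/c)⁻¹ with he
  have he0 : (0:ℝ) < 1/b + 1/c := by positivity
  have hee : 1/e = 1/b + 1/c := by rw [he, one_div, inv_inv]
  have he1 : 0 < e := by rw [he]; positivity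
  have hpq : a.HolderConjugate e := by
    rw [Real.holderConjugate_iff]
    constructor
    · exact ha
    · rw [← one_div, ← one_div, hee]; linarith
  have h1 : ∫⁻ x, F x * (G x * H x) ∂μ ≤
      (∫⁻ x, F x ^ a ∂μ) ^ (1/a) * (∫⁻ x, (G x * H x) ^ e ∂μ) ^ (1/e) :=
    ENNReal.lintegral_mul_le_Lp_mul_Lq μ hpq hF (hG.mul hH)
  have hpq2 : (b/e).HolderConjugate (c/e) := by
    rw [Real.holderConjugate_iff]
    constructor
    · rw [he, div_eq_mul_inv, inv_inv, mul_add, mul_one_div, div_self hb0.ne', mul_one_div]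
      have : 0 < b/c := by positivity
      linarith
    · rw [inv_div, inv_div, he]
      field_simp
  have h2 : ∫⁻ x, G x ^ e * H x ^ e ∂μ ≤
      (∫⁻ x, (G x ^ e) ^ (b/e) ∂μ) ^ (1/(b/e)) * (∫⁻ x, (H x ^ e) ^ (c/e) ∂μ) ^ (1/(c/e)) :=
    ENNReal.lintegral_mul_le_Lp_mul_Lq μ hpq2 (hG.pow_const e) (hH.pow_const e)
  have hGe : ∀ x : ℝ≥0∞, (x ^ e) ^ (b/e) = x ^ b := by
    intro x; rw [← ENNReal.rpow_mul]; congr 1; field_simp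
  have hHe : ∀ x : ℝ≥0∞, (x ^ e) ^ (c/e) = x ^ c := by
    intro x; rw [← ENNReal.rpow_mul]; congr 1; field_simp
  simp_rw [hGe, hHe] at h2
  have h3 : (∫⁻ x, (G x * H x) ^ e ∂μ) ^ (1/e) ≤
      (∫⁻ x, G x ^ b ∂μ) ^ (1/b) * (∫⁻ x, H x ^ c ∂μ) ^ (1/c) := by
    have hmul : ∀ x, (G x * H x) ^ e = G x ^ e * H x ^ e := fun x =>
      ENNReal.mul_rpow_of_nonneg _ _ he1.le
    simp_rw [hmul]
    calc (∫⁻ x, G x ^ e * H x ^ e ∂μ) ^ (1/e)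
        ≤ ((∫⁻ x, G x ^ b ∂μ) ^ (1/(b/e)) * (∫⁻ x, H x ^ c ∂μ) ^ (1/(c/e))) ^ (1/e) :=
          ENNReal.rpow_le_rpow h2 (by positivity)
      _ = (∫⁻ x, G x ^ b ∂μ) ^ (1/b) * (∫⁻ x, H x ^ c ∂μ) ^ (1/c) := by
          rw [ENNReal.mul_rpow_of_nonneg _ _ (by positivity : (0:ℝ) ≤ 1/e),
            ← ENNReal.rpow_mul, ← ENNReal.rpow_mul]
          have e1 : 1/(b/e) * (1/e) = 1/b := by
            field_simp
          have e2 : 1/(c/e) * (1/e) = 1/c := by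
            field_simp
          rw [e1, e2]
  calc ∫⁻ x, F x * G x * H x ∂μ = ∫⁻ x, F x * (G x * H x) ∂μ := by simp_rw [mul_assoc]
    _ ≤ (∫⁻ x, F x ^ a ∂μ) ^ (1/a) * (∫⁻ x, (G x * H x) ^ e ∂μ) ^ (1/e) := h1
    _ ≤ (∫⁻ x, F x ^ a ∂μ) ^ (1/a) *
        ((∫⁻ x, G x ^ b ∂μ) ^ (1/b) * (∫⁻ x, H x ^ c ∂μ) ^ (1/c)) := mul_le_mul_right h3 _
    _ = _ := by rw [mul_assoc]

lemma aux_lintegral_sub {d : ℕ} (h : EuclideanSpace ℝ (Fin d) → ℝ≥0∞) (hh : Measurable h)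
    (x : EuclideanSpace ℝ (Fin d)) : ∫⁻ y, h (x - y) = ∫⁻ y, h y := by
  have h2 : ∫⁻ y, h (x + -y) = ∫⁻ y, h (x + y) :=
    (Measure.measurePreserving_neg (volume : Measure (EuclideanSpace ℝ (Fin d)))).lintegral_comp
      (hh.comp (measurable_const_add x))
  simp_rw [sub_eq_add_neg]
  rw [h2, lintegral_add_left_eq_self h x]

lemma aux_young {d : ℕ} {G F : EuclideanSpace ℝ (Fin d) → ℝ≥0∞}
    (hG : Measurable G) (hF : Measurable F) {p q r : ℝ}
    (hp : 1 < p) (hpr : p < r) (hq : 1/q = 1 + 1/r - 1/p) :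
    (∫⁻ x, (∫⁻ y, G (x - y) * F y) ^ r) ^ (1/r) ≤
      (∫⁻ x, G x ^ q) ^ (1/q) * (∫⁻ x, F x ^ p) ^ (1/p) := by
  have hp0 : (0:ℝ) < p := lt_trans one_pos hp
  have hr1 : (1:ℝ) < r := lt_trans hp hpr
  have hr0 : (0:ℝ) < r := lt_trans one_pos hr1
  have hrp : 1/r < 1/p := one_div_lt_one_div_of_lt hp0 hpr
  have hp1 : 1/p < 1 := by rw [div_lt_one hp0]; exact hp
  have hr01 : 0 < 1/r := by positivity
  have hq0 : (0:ℝ) < 1/q := by rw [hq]; linarith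
  have hqpos : 0 < q := by
    rcases lt_trichotomy q 0 with h | h | h
    · exfalso; have := one_div_neg.mpr h; linarith
    · exfalso; rw [h] at hq0; simp at hq0
    · exact h
  have hq1 : 1 < q := by
    have hlt : 1/q < 1 := by rw [hq]; linarith
    rw [div_lt_one hqpos] at hlt; exact hlt
  -- the auxiliary exponents
  set β : ℝ := 1 - 1/p with hβ
  set γ : ℝ := 1/p - 1/r with hγ
  have hβ0 : 0 < β := by rw [hβ]; linarith
  have hγ0 : 0 < γ := by rw [hγ]; linarith
  set b : ℝ := β⁻¹ with hb
  set c : ℝ := γ⁻¹ with hc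
  have hb0 : 0 < b := by rw [hb]; positivity
  have hc0 : 0 < c := by rw [hc]; positivity
  have h1b : 1/b = β := by rw [hb, one_div, inv_inv]
  have h1c : 1/c = γ := by rw [hc, one_div, inv_inv]
  have hb1 : 1 < b := by
    rw [hb]
    refine (one_lt_inv₀ hβ0).mpr ?_
    rw [hβ]; have : 0 < 1/p := by positivity
    linarith
  have hc1 : 1 < c := by
    rw [hc]
    refine (one_lt_inv₀ hγ0).mpr ?_
    rw [hγ]; linarith
  have hsum : 1/r + 1/b + 1/c = 1 := by rw [h1b, h1c, hβ, hγ]; ring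
  set A : ℝ≥0∞ := ∫⁻ x, G x ^ q with hA
  set Bp : ℝ≥0∞ := ∫⁻ x, F x ^ p with hBp
  -- pointwise splitting
  have key : ∀ g f : ℝ≥0∞, g * f =
      (g ^ q * f ^ p) ^ (1/r) * g ^ (q * (1/b)) * f ^ (p * (1/c)) := by
    intro g f
    rw [ENNReal.mul_rpow_of_nonneg _ _ (le_of_lt hr01), ← ENNReal.rpow_mul, ← ENNReal.rpow_mul]
    have : g ^ (q * (1/r)) * f ^ (p * (1/r)) * g ^ (q * (1/b)) * f ^ (p * (1/c))
        = (g ^ (q * (1/r)) * g ^ (q * (1/b))) * (f ^ (p * (1/r)) * f ^ (p * (1/c))) := by ring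
    rw [this, ← ENNReal.rpow_add_of_nonneg _ _ (by positivity) (by positivity),
      ← ENNReal.rpow_add_of_nonneg _ _ (by positivity) (by positivity)]
    have eg : q * (1/r) + q * (1/b) = 1 := by
      rw [h1b, hβ, ← mul_add]
      have : 1/r + (1 - 1/p) = 1/q := by rw [hq]; ring
      rw [this, mul_one_div, div_self hqpos.ne']
    have ef : p * (1/r) + p * (1/c) = 1 := by
      rw [h1c, hγ, ← mul_add]
      have : 1/r + (1/p - 1/r) = 1/p := by ring
      rw [this, mul_one_div, div_self hp0.ne']
    rw [eg, ef, ENNReal.rpow_one, ENNReal.rpow_one]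
  -- measurability helpers
  have hGxy : Measurable fun z : EuclideanSpace ℝ (Fin d) × EuclideanSpace ℝ (Fin d) =>
      G (z.1 - z.2) := hG.comp (measurable_fst.sub measurable_snd)
  have hT : Measurable fun x => ∫⁻ y, G (x - y) ^ q * F y ^ p :=
    Measurable.lintegral_prod_right
      ((hGxy.pow_const q).mul ((hF.comp measurable_snd).pow_const p))
  -- per x Hölder
  have inner_le : ∀ x, (∫⁻ y, G (x - y) * F y) ≤
      (∫⁻ y, G (x - y) ^ q * F y ^ p) ^ (1/r) * A ^ (1/b) * Bp ^ (1/c) := by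
    intro x
    have hGx : Measurable fun y => G (x - y) := hG.comp (measurable_const_sub x)
    have H3 := aux_holder3 (μ := (volume : Measure (EuclideanSpace ℝ (Fin d)))) (F := fun y => (G (x - y) ^ q * F y ^ p) ^ (1/r))
      (G := fun y => G (x - y) ^ (q * (1/b))) (H := fun y => F y ^ (p * (1/c)))
      (((hGx.pow_const q).mul (hF.pow_const p)).pow_const _).aemeasurable
      ((hGx.pow_const _)).aemeasurable ((hF.pow_const _)).aemeasurable hr1 hb1 hc1 hsum
    calc (∫⁻ y, G (x - y) * F y)
        = ∫⁻ y, (G (x - y) ^ q * F y ^ p) ^ (1/r) * G (x - y) ^ (q * (1/b))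
            * F y ^ (p * (1/c)) := by simp_rw [← key]
      _ ≤ (∫⁻ y, ((G (x - y) ^ q * F y ^ p) ^ (1/r)) ^ r) ^ (1/r) *
          (∫⁻ y, (G (x - y) ^ (q * (1/b))) ^ b) ^ (1/b) *
          (∫⁻ y, (F y ^ (p * (1/c))) ^ c) ^ (1/c) := H3
      _ = (∫⁻ y, G (x - y) ^ q * F y ^ p) ^ (1/r) * A ^ (1/b) * Bp ^ (1/c) := by
          congr 1
          · congr 1
            · congr 1
              refine lintegral_congr fun y => ?_
              rw [← ENNReal.rpow_mul, one_div, inv_mul_cancel₀ hr0.ne', ENNReal.rpow_one]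
            · rw [hA]
              have hexp : ∀ z : ℝ≥0∞, (z ^ (q * (1/b))) ^ b = z ^ q := by
                intro z; rw [← ENNReal.rpow_mul]; congr 1
                field_simp
              simp_rw [hexp]
              rw [aux_lintegral_sub _ (hG.pow_const q) x]
          · rw [hBp]
            have hexp : ∀ z : ℝ≥0∞, (z ^ (p * (1/c))) ^ c = z ^ p := by
              intro z; rw [← ENNReal.rpow_mul]; congr 1
              field_simp
            simp_rw [hexp]
  -- integrate the r-th power
  have step2 : (∫⁻ x, (∫⁻ y, G (x - y) * F y) ^ r) ≤
      A ^ ((1/q) * r) * Bp ^ ((1/p) * r) := by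
    have hTint : ∫⁻ x, (∫⁻ y, G (x - y) ^ q * F y ^ p) = A * Bp := by
      rw [lintegral_lintegral_swap
        ((hGxy.pow_const q).mul ((hF.comp measurable_snd).pow_const p)).aemeasurable]
      have hin : ∀ y, ∫⁻ x, G (x - y) ^ q * F y ^ p = A * F y ^ p := by
        intro y
        have hme : AEMeasurable (fun x => G (x - y) ^ q)
            (volume : Measure (EuclideanSpace ℝ (Fin d))) :=
          ((hG.comp (measurable_sub_const y)).pow_const q).aemeasurable
        rw [lintegral_mul_const'' _ hme]
        congr 1
        exact lintegral_sub_right_eq_self (fun z => G z ^ q) y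
      simp_rw [hin]
      rw [lintegral_const_mul'' _ (hF.pow_const p).aemeasurable]
    calc (∫⁻ x, (∫⁻ y, G (x - y) * F y) ^ r)
        ≤ ∫⁻ x, ((∫⁻ y, G (x - y) ^ q * F y ^ p) ^ (1/r) * A ^ (1/b) * Bp ^ (1/c)) ^ r :=
          lintegral_mono fun x => ENNReal.rpow_le_rpow (inner_le x) hr0.le
      _ = ∫⁻ x, (∫⁻ y, G (x - y) ^ q * F y ^ p) * (A ^ ((1/b) * r) * Bp ^ ((1/c) * r)) := by
          refine lintegral_congr fun x => ?_
          rw [ENNReal.mul_rpow_of_nonneg _ _ hr0.le, ENNReal.mul_rpow_of_nonneg _ _ hr0.le,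
            ← ENNReal.rpow_mul, ← ENNReal.rpow_mul, ← ENNReal.rpow_mul,
            one_div, inv_mul_cancel₀ hr0.ne', ENNReal.rpow_one, mul_assoc]
      _ = A * Bp * (A ^ ((1/b) * r) * Bp ^ ((1/c) * r)) := by
          rw [lintegral_mul_const'' _ hT.aemeasurable, hTint]
      _ = (A * A ^ ((1/b) * r)) * (Bp * Bp ^ ((1/c) * r)) := by ring
      _ = A ^ ((1/q) * r) * Bp ^ ((1/p) * r) := by
          nth_rewrite 1 [← ENNReal.rpow_one A]
          nth_rewrite 1 [← ENNReal.rpow_one Bp]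
          rw [← ENNReal.rpow_add_of_nonneg _ _ zero_le_one (by positivity),
            ← ENNReal.rpow_add_of_nonneg _ _ zero_le_one (by positivity)]
          congr 1
          · congr 1
            rw [h1b, hβ, hq]; ring_nf
            field_simp
            ring
          · congr 1
            rw [h1c, hγ]; field_simp
            ring
  calc (∫⁻ x, (∫⁻ y, G (x - y) * F y) ^ r) ^ (1/r)
      ≤ (A ^ ((1/q) * r) * Bp ^ ((1/p) * r)) ^ (1/r) := ENNReal.rpow_le_rpow step2 (by positivity)
    _ = A ^ (1/q) * Bp ^ (1/p) := by
        rw [ENNReal.mul_rpow_of_nonneg _ _ (by positivity), ← ENNReal.rpow_mul,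
          ← ENNReal.rpow_mul]
        congr 1 <;> [congr 1; congr 1] <;> field_simp <;> ring

noncomputable def pkC (d : ℕ) : ℝ :=
  Real.Gamma (((d : ℝ) + 1) / 2) / Real.pi ^ (((d : ℝ) + 1) / 2)

lemma pkC_pos (d : ℕ) : 0 < pkC d := by
  unfold pkC
  apply div_pos (Real.Gamma_pos_of_pos (by positivity))
  exact Real.rpow_pos_of_pos Real.pi_pos _

lemma pk_denom_pos (d : ℕ) {t : ℝ} (ht : 0 < t) (x : EuclideanSpace ℝ (Fin d)) :
    0 < (t ^ 2 + ‖x‖ ^ 2) ^ (((d : ℝ) + 1) / 2) :=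
  Real.rpow_pos_of_pos (by positivity) _

lemma poissonKernel_nonneg (d : ℕ) {t : ℝ} (ht : 0 < t) (x : EuclideanSpace ℝ (Fin d)) :
    0 ≤ poissonKernelEucl d t x := by
  have hc := (pkC_pos d).le
  unfold pkC at hc
  unfold poissonKernelEucl
  exact div_nonneg (mul_nonneg hc ht.le) (pk_denom_pos d ht x).le

lemma poissonKernel_continuous (d : ℕ) {t : ℝ} (ht : 0 < t) :
    Continuous (poissonKernelEucl d t) := by
  unfold poissonKernelEucl
  refine Continuous.div continuous_const ?_ (fun x => (pk_denom_pos d ht x).ne')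
  exact (continuous_const.add ((continuous_norm).pow 2)).rpow_const
    (fun x => Or.inr (by positivity))

lemma pk_tpow (d : ℕ) {t : ℝ} (ht : 0 < t) :
    (t ^ 2) ^ (((d : ℝ) + 1) / 2) = t ^ ((d : ℝ) + 1) := by
  rw [← Real.rpow_natCast t 2, ← Real.rpow_mul ht.le]
  congr 1
  ring

lemma poissonKernel_le (d : ℕ) {t : ℝ} (ht : 0 < t) (x : EuclideanSpace ℝ (Fin d)) :
    poissonKernelEucl d t x ≤ pkC d / t ^ (d : ℝ) := by
  have hD : t ^ ((d : ℝ) + 1) ≤ (t ^ 2 + ‖x‖ ^ 2) ^ (((d : ℝ) + 1) / 2) := by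
    rw [← pk_tpow d ht]
    exact Real.rpow_le_rpow (by positivity) (by nlinarith [sq_nonneg ‖x‖]) (by positivity)
  have hc := (pkC_pos d).le
  have h1 : poissonKernelEucl d t x ≤ pkC d * t / t ^ ((d : ℝ) + 1) := by
    unfold poissonKernelEucl pkC
    unfold pkC at hc
    exact div_le_div_of_nonneg_left (mul_nonneg hc ht.le) (Real.rpow_pos_of_pos ht _) hD
  refine h1.trans (le_of_eq ?_)
  rw [Real.rpow_add ht, Real.rpow_one]
  field_simp

lemma poissonKernel_scale (d : ℕ) {t : ℝ} (ht : 0 < t) (x : EuclideanSpace ℝ (Fin d)) :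
    poissonKernelEucl d 1 (t⁻¹ • x) = t ^ (d : ℝ) * poissonKernelEucl d t x := by
  have hn : ‖t⁻¹ • x‖ = t⁻¹ * ‖x‖ := by
    rw [norm_smul]
    congr 1
    exact abs_of_pos (inv_pos.mpr ht)
  unfold poissonKernelEucl
  rw [hn]
  have hbase : (1 : ℝ) ^ 2 + (t⁻¹ * ‖x‖) ^ 2 = (t ^ 2 + ‖x‖ ^ 2) / t ^ 2 := by
    field_simp
  rw [hbase, Real.div_rpow (by positivity) (sq_nonneg t), pk_tpow d ht]
  have hD := pk_denom_pos d ht x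
  have htd : (0:ℝ) < t ^ ((d : ℝ)) := Real.rpow_pos_of_pos ht _
  rw [Real.rpow_add ht, Real.rpow_one]
  field_simp

lemma lintegral_poissonKernel_eq (d : ℕ) {t : ℝ} (ht : 0 < t) :
    ∫⁻ x, ENNReal.ofReal (poissonKernelEucl d t x) =
      ∫⁻ x, ENNReal.ofReal (poissonKernelEucl d 1 x) := by
  have htd : (0:ℝ) < t ^ (d : ℝ) := Real.rpow_pos_of_pos ht _
  have h1 : ∀ x, poissonKernelEucl d t x = (t ^ (d : ℝ))⁻¹ * poissonKernelEucl d 1 (t⁻¹ • x) := by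
    intro x
    rw [poissonKernel_scale d ht x]
    field_simp
  have hk1 : Measurable fun x : EuclideanSpace ℝ (Fin d) =>
      ENNReal.ofReal (poissonKernelEucl d 1 x) :=
    ENNReal.measurable_ofReal.comp (poissonKernel_continuous d one_pos).measurable
  simp_rw [h1, ENNReal.ofReal_mul (inv_nonneg.mpr htd.le)]
  have hme : AEMeasurable (fun x : EuclideanSpace ℝ (Fin d) =>
      ENNReal.ofReal (poissonKernelEucl d 1 (t⁻¹ • x))) volume :=
    (hk1.comp (measurable_const_smul t⁻¹)).aemeasurable
  rw [lintegral_const_mul'' _ hme]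
  have hmap : ∫⁻ x, ENNReal.ofReal (poissonKernelEucl d 1 (t⁻¹ • x)) =
      ∫⁻ y, ENNReal.ofReal (poissonKernelEucl d 1 y)
        ∂(Measure.map (t⁻¹ • · : EuclideanSpace ℝ (Fin d) → EuclideanSpace ℝ (Fin d)) volume) :=
    (lintegral_map hk1 (measurable_const_smul t⁻¹)).symm
  rw [hmap, Measure.map_addHaar_smul (volume : Measure (EuclideanSpace ℝ (Fin d)))
    (inv_ne_zero ht.ne'), lintegral_smul_measure]
  have habs : ENNReal.ofReal |((t⁻¹) ^ Module.finrank ℝ (EuclideanSpace ℝ (Fin d)))⁻¹|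
      = ENNReal.ofReal (t ^ (d : ℝ)) := by
    congr 1
    rw [finrank_euclideanSpace_fin, inv_pow, inv_inv, abs_of_pos (by positivity),
      ← Real.rpow_natCast t d]
  rw [habs, smul_eq_mul, ← mul_assoc, ← ENNReal.ofReal_mul (inv_nonneg.mpr htd.le),
    inv_mul_cancel₀ htd.ne', ENNReal.ofReal_one, one_mul]

lemma I1_ne_top (d : ℕ) :
    (∫⁻ x, ENNReal.ofReal (poissonKernelEucl d 1 x)) ≠ ∞ := by
  have hfr : (Module.finrank ℝ (EuclideanSpace ℝ (Fin d)) : ℝ) < (d : ℝ) + 1 := by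
    rw [finrank_euclideanSpace_fin]; linarith
  have hint : Integrable
      (fun x : EuclideanSpace ℝ (Fin d) => pkC d * ((1:ℝ) + ‖x‖ ^ 2) ^ (-((d : ℝ) + 1) / 2))
      volume := (integrable_rpow_neg_one_add_norm_sq hfr).const_mul _
  have heq : ∀ x : EuclideanSpace ℝ (Fin d),
      poissonKernelEucl d 1 x = pkC d * ((1:ℝ) + ‖x‖ ^ 2) ^ (-((d : ℝ) + 1) / 2) := by
    intro x
    unfold poissonKernelEucl pkC
    rw [neg_div, Real.rpow_neg (by positivity), one_pow]
    field_simp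
  simp_rw [heq]
  exact hint.lintegral_lt_top.ne

noncomputable def Kconst (d : ℕ) : ℝ≥0∞ :=
  (ENNReal.ofReal (pkC d) ⊔ ∫⁻ x, ENNReal.ofReal (poissonKernelEucl d 1 x)) ⊔ 1

lemma Kconst_ne_top (d : ℕ) : Kconst d ≠ ∞ := by
  unfold Kconst
  simp [I1_ne_top d, ENNReal.ofReal_ne_top]

lemma one_le_Kconst (d : ℕ) : 1 ≤ Kconst d := le_sup_right

lemma kernelLq (d : ℕ) {t q : ℝ} (ht : 0 < t) (hq : 1 < q) :
    (∫⁻ x, ENNReal.ofReal (poissonKernelEucl d t x) ^ q) ^ (1/q) ≤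
      Kconst d * ENNReal.ofReal (t ^ ((d : ℝ)/q - d)) := by
  have hq0 : (0:ℝ) < q := lt_trans one_pos hq
  have htd : (0:ℝ) < t ^ (d : ℝ) := Real.rpow_pos_of_pos ht _
  have htnd : (0:ℝ) < t ^ (-(d : ℝ)) := Real.rpow_pos_of_pos ht _
  set M : ℝ≥0∞ := ENNReal.ofReal (pkC d / t ^ (d : ℝ)) with hM
  have hPM : ∀ x, ENNReal.ofReal (poissonKernelEucl d t x) ≤ M :=
    fun x => ENNReal.ofReal_le_ofReal (poissonKernel_le d ht x)
  have hMle : M ≤ Kconst d * ENNReal.ofReal (t ^ (-(d : ℝ))) := by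
    rw [hM, div_eq_mul_inv, ← Real.rpow_neg ht.le,
      ENNReal.ofReal_mul (pkC_pos d).le]
    exact mul_le_mul_left (le_sup_left.trans le_sup_left) _
  have step1 : (∫⁻ x, ENNReal.ofReal (poissonKernelEucl d t x) ^ q) ≤
      M ^ (q - 1) * Kconst d := by
    have hsplit : ∀ x, ENNReal.ofReal (poissonKernelEucl d t x) ^ q ≤
        M ^ (q - 1) * ENNReal.ofReal (poissonKernelEucl d t x) := by
      intro x
      have hx := ENNReal.rpow_add_of_nonneg (x := ENNReal.ofReal (poissonKernelEucl d t x))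
        (q - 1) (1:ℝ) (by linarith) zero_le_one
      rw [ENNReal.rpow_one] at hx
      have hq1 : q - 1 + 1 = q := by ring
      rw [hq1] at hx
      rw [hx]
      exact mul_le_mul_left (ENNReal.rpow_le_rpow (hPM x) (by linarith)) _
    calc (∫⁻ x, ENNReal.ofReal (poissonKernelEucl d t x) ^ q)
        ≤ ∫⁻ x, M ^ (q - 1) * ENNReal.ofReal (poissonKernelEucl d t x) :=
          lintegral_mono hsplit
      _ = M ^ (q - 1) * ∫⁻ x, ENNReal.ofReal (poissonKernelEucl d t x) :=
          lintegral_const_mul' _ _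
            (ENNReal.rpow_ne_top_of_nonneg (by linarith) ENNReal.ofReal_ne_top)
      _ ≤ M ^ (q - 1) * Kconst d := by
          rw [lintegral_poissonKernel_eq d ht]
          exact mul_le_mul_right (le_sup_right.trans le_sup_left) _
  calc (∫⁻ x, ENNReal.ofReal (poissonKernelEucl d t x) ^ q) ^ (1/q)
      ≤ (M ^ (q - 1) * Kconst d) ^ (1/q) := ENNReal.rpow_le_rpow step1 (by positivity)
    _ ≤ ((Kconst d * ENNReal.ofReal (t ^ (-(d : ℝ)))) ^ (q - 1) * Kconst d) ^ (1/q) := by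
        apply ENNReal.rpow_le_rpow _ (by positivity)
        exact mul_le_mul_left (ENNReal.rpow_le_rpow hMle (by linarith)) _
    _ = Kconst d ^ ((q-1) * (1/q)) * Kconst d ^ (1/q) *
          ENNReal.ofReal (t ^ (-(d : ℝ))) ^ ((q-1) * (1/q)) := by
        rw [ENNReal.mul_rpow_of_nonneg _ _ (by positivity : (0:ℝ) ≤ 1/q),
          ENNReal.mul_rpow_of_nonneg _ _ (by linarith : (0:ℝ) ≤ q - 1),
          ENNReal.mul_rpow_of_nonneg _ _ (by positivity : (0:ℝ) ≤ 1/q),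
          ← ENNReal.rpow_mul, ← ENNReal.rpow_mul]
        ring
    _ = Kconst d * ENNReal.ofReal (t ^ ((d : ℝ)/q - d)) := by
        rw [← ENNReal.rpow_add_of_nonneg _ _
          (mul_nonneg (by linarith) (by positivity)) (by positivity)]
        have h1 : (q - 1) * (1/q) + 1/q = 1 := by field_simp; ring
        rw [h1, ENNReal.rpow_one]
        congr 1
        rw [ENNReal.ofReal_rpow_of_pos htnd, ← Real.rpow_mul ht.le]
        congr 1
        field_simp
        ring

lemma main_estimate (d : ℕ) {t : ℝ} (ht : 0 < t) {f : EuclideanSpace ℝ (Fin d) → ℝ}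
    (hf : Measurable f) {p r : ℝ} (hp : 1 < p) (hpr : p < r) :
    eLpNorm (poissonProp d t f) (ENNReal.ofReal r) volume ≤
      Kconst d * ENNReal.ofReal (t ^ ((d : ℝ)/r - (d : ℝ)/p)) *
        eLpNorm f (ENNReal.ofReal p) volume := by
  have hp0 : (0:ℝ) < p := lt_trans one_pos hp
  have hr1 : (1:ℝ) < r := lt_trans hp hpr
  have hr0 : (0:ℝ) < r := lt_trans one_pos hr1
  set q : ℝ := (1 + 1/r - 1/p)⁻¹ with hqdef
  have hq : 1/q = 1 + 1/r - 1/p := by rw [hqdef, one_div, inv_inv]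
  have hrp : 1/r < 1/p := one_div_lt_one_div_of_lt hp0 hpr
  have hp1 : 1/p < 1 := by rw [div_lt_one hp0]; exact hp
  have hq0 : (0:ℝ) < 1/q := by rw [hq]; linarith [one_div_pos.mpr hr0]
  have hqpos : (0:ℝ) < q := by
    rcases lt_trichotomy q 0 with h | h | h
    · exfalso; have := one_div_neg.mpr h; linarith
    · exfalso; rw [h] at hq0; simp at hq0
    · exact h
  have hq1 : 1 < q := by
    have hlt : 1/q < 1 := by rw [hq]; linarith
    rw [div_lt_one hqpos] at hlt; exact hlt
  set G : EuclideanSpace ℝ (Fin d) → ℝ≥0∞ :=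
    fun x => ENNReal.ofReal (poissonKernelEucl d t x) with hGdef
  set F : EuclideanSpace ℝ (Fin d) → ℝ≥0∞ := fun y => (‖f y‖₊ : ℝ≥0∞) with hFdef
  have hG : Measurable G :=
    ENNReal.measurable_ofReal.comp (poissonKernel_continuous d ht).measurable
  have hF : Measurable F := hf.nnnorm.coe_nnreal_ennreal
  have key : ∀ x, (‖poissonProp d t f x‖₊ : ℝ≥0∞) ≤ ∫⁻ y, G (x - y) * F y := by
    intro x
    calc (‖poissonProp d t f x‖₊ : ℝ≥0∞)
        ≤ ∫⁻ y, ‖poissonKernelEucl d t (x - y) * f y‖₊ :=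
          enorm_integral_le_lintegral_enorm _
      _ = ∫⁻ y, G (x - y) * F y := by
          refine lintegral_congr fun y => ?_
          rw [nnnorm_mul, ENNReal.coe_mul, hGdef, hFdef]
          congr 1
          exact Real.enorm_eq_ofReal (poissonKernel_nonneg d ht _)
  have hrne : ENNReal.ofReal r ≠ 0 := by
    simp [ENNReal.ofReal_eq_zero]; linarith
  have hpne : ENNReal.ofReal p ≠ 0 := by
    simp [ENNReal.ofReal_eq_zero]; linarith
  rw [eLpNorm_eq_lintegral_rpow_enorm_toReal hrne ENNReal.ofReal_ne_top,
    eLpNorm_eq_lintegral_rpow_enorm_toReal hpne ENNReal.ofReal_ne_top,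
    ENNReal.toReal_ofReal hr0.le, ENNReal.toReal_ofReal hp0.le]
  have hdq : (d : ℝ)/q - (d : ℝ) = (d : ℝ)/r - (d : ℝ)/p := by
    have h1 : (d : ℝ)/q = (d : ℝ) * (1/q) := by ring
    rw [h1, hq]; ring
  calc (∫⁻ x, (‖poissonProp d t f x‖₊ : ℝ≥0∞) ^ r) ^ (1/r)
      ≤ (∫⁻ x, (∫⁻ y, G (x - y) * F y) ^ r) ^ (1/r) := by
        apply ENNReal.rpow_le_rpow _ (by positivity)
        exact lintegral_mono fun x => ENNReal.rpow_le_rpow (key x) hr0.le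
    _ ≤ (∫⁻ x, G x ^ q) ^ (1/q) * (∫⁻ x, F x ^ p) ^ (1/p) :=
        aux_young hG hF hp hpr hq
    _ ≤ (Kconst d * ENNReal.ofReal (t ^ ((d : ℝ)/q - d))) * (∫⁻ x, F x ^ p) ^ (1/p) :=
        mul_le_mul_left (kernelLq d ht hq1) _
    _ = Kconst d * ENNReal.ofReal (t ^ ((d : ℝ)/r - (d : ℝ)/p)) *
          (∫⁻ x, (‖f x‖₊ : ℝ≥0∞) ^ p) ^ (1/p) := by rw [hdq]

/-- Strichartz-type pair of Grand Lebesgue spaces for the Poisson semigroup: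
`‖P_t * f‖_{G(ν)} · φ(G(ψ), t^d) ≤ C ‖f‖_{G(ψ)} · φ(G(ν), t^d)` for `t > 2`. -/
theorem poisson_strichartz_GL_pair (d : ℕ) (hd : 1 ≤ d)
    (a₁ b₁ a₂ : ℝ) (b₂ : ℝ≥0∞)
    (h1 : 1 ≤ a₁) (h2 : a₁ < b₁) (h3 : b₁ ≤ a₂) (h4 : ENNReal.ofReal a₂ < b₂)
    (ψ ν : ℝ → ℝ)
    (hψ_cont : ContinuousOn ψ (Set.Ioo a₁ b₁))
    (hψ_pos : ∀ p ∈ Set.Ioo a₁ b₁, 0 < ψ p)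
    (hψ_inf : ∃ ε : ℝ, 0 < ε ∧ ∀ p ∈ Set.Ioo a₁ b₁, ε ≤ ψ p)
    (hν_cont : ContinuousOn ν (glSet a₂ b₂))
    (hν_pos : ∀ r ∈ glSet a₂ b₂, 0 < ν r)
    (hν_inf : ∃ ε : ℝ, 0 < ε ∧ ∀ r ∈ glSet a₂ b₂, ε ≤ ν r) :
    ∃ C : ℝ, 0 < C ∧ ∀ t : ℝ, 2 < t → ∀ f : EuclideanSpace ℝ (Fin d) → ℝ,
      Measurable f →
      glNorm d (glSet a₂ b₂) ν (poissonProp d t f)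
          * (⨆ p ∈ Set.Ioo a₁ b₁, ENNReal.ofReal (t ^ ((d : ℝ) / p) / ψ p))
        ≤ ENNReal.ofReal C * glNorm d (Set.Ioo a₁ b₁) ψ f
            * ⨆ r ∈ glSet a₂ b₂, ENNReal.ofReal (t ^ ((d : ℝ) / r) / ν r) := by
  refine ⟨(Kconst d).toReal, ENNReal.toReal_pos
    (zero_lt_one.trans_le (one_le_Kconst d)).ne' (Kconst_ne_top d), ?_⟩
  intro t ht f hf
  have ht0 : (0:ℝ) < t := by linarith
  rw [ENNReal.ofReal_toReal (Kconst_ne_top d)]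
  conv_lhs => rw [glNorm]
  rw [ENNReal.iSup_mul]
  refine iSup_le fun r => ?_
  rw [ENNReal.iSup_mul]
  refine iSup_le fun hr => ?_
  rw [ENNReal.mul_iSup]
  refine iSup_le fun p => ?_
  rw [ENNReal.mul_iSup]
  refine iSup_le fun hp => ?_
  have hp_mem : p ∈ Set.Ioo a₁ b₁ := hp
  have hr_mem : r ∈ glSet a₂ b₂ := hr
  obtain ⟨hp_l, hp_r⟩ := hp_mem
  obtain ⟨hr_l, hr_b⟩ := hr_mem
  have hp1 : 1 < p := lt_of_le_of_lt h1 hp_l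
  have hpr : p < r := lt_of_lt_of_le hp_r (h3.trans hr_l.le)
  have hψp : 0 < ψ p := hψ_pos p hp
  have hνr : 0 < ν r := hν_pos r hr
  have est := main_estimate d ht0 hf hp1 hpr
  have hABle : eLpNorm f (ENNReal.ofReal p) volume / ENNReal.ofReal (ψ p) ≤
      glNorm d (Set.Ioo a₁ b₁) ψ f := by
    rw [glNorm]
    exact le_biSup (f := fun p => eLpNorm f (ENNReal.ofReal p) volume / ENNReal.ofReal (ψ p)) hp
  have hBle : ENNReal.ofReal (t ^ ((d:ℝ)/r) / ν r) ≤
      ⨆ r' ∈ glSet a₂ b₂, ENNReal.ofReal (t ^ ((d:ℝ)/r') / ν r') :=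
    le_biSup (f := fun r' => ENNReal.ofReal (t ^ ((d:ℝ)/r') / ν r')) hr
  refine le_trans ?_ (mul_le_mul' (mul_le_mul' le_rfl hABle) hBle)
  set Xf := eLpNorm f (ENNReal.ofReal p) volume with hXf
  set XP := eLpNorm (poissonProp d t f) (ENNReal.ofReal r) volume with hXP
  have step1 : XP / ENNReal.ofReal (ν r) * ENNReal.ofReal (t ^ ((d:ℝ)/p) / ψ p) ≤
      (Kconst d * ENNReal.ofReal (t ^ ((d:ℝ)/r - (d:ℝ)/p)) * Xf) / ENNReal.ofReal (ν r) *
        ENNReal.ofReal (t ^ ((d:ℝ)/p) / ψ p) := by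
    gcongr
  refine step1.trans (le_of_eq ?_)
  have hWTN : ENNReal.ofReal (t ^ ((d:ℝ)/r - (d:ℝ)/p)) * ENNReal.ofReal (t ^ ((d:ℝ)/p) / ψ p) *
      ENNReal.ofReal ((ν r)⁻¹) = ENNReal.ofReal (t ^ ((d:ℝ)/r) / ν r) *
      ENNReal.ofReal ((ψ p)⁻¹) := by
    rw [← ENNReal.ofReal_mul (Real.rpow_nonneg ht0.le _),
      ← ENNReal.ofReal_mul (by positivity),
      ← ENNReal.ofReal_mul (by positivity)]
    congr 1
    have hsplit : t ^ ((d:ℝ)/r) = t ^ ((d:ℝ)/r - (d:ℝ)/p) * t ^ ((d:ℝ)/p) := by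
      rw [← Real.rpow_add ht0]; congr 1; ring
    rw [hsplit]
    field_simp
  rw [ENNReal.div_eq_inv_mul, ENNReal.div_eq_inv_mul, ← ENNReal.ofReal_inv_of_pos hνr,
    ← ENNReal.ofReal_inv_of_pos hψp]
  calc ENNReal.ofReal ((ν r)⁻¹) * (Kconst d * ENNReal.ofReal (t ^ ((d:ℝ)/r - (d:ℝ)/p)) * Xf) *
        ENNReal.ofReal (t ^ ((d:ℝ)/p) / ψ p)
      = Kconst d * Xf * (ENNReal.ofReal (t ^ ((d:ℝ)/r - (d:ℝ)/p)) *
          ENNReal.ofReal (t ^ ((d:ℝ)/p) / ψ p) * ENNReal.ofReal ((ν r)⁻¹)) := by ring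
    _ = Kconst d * Xf * (ENNReal.ofReal (t ^ ((d:ℝ)/r) / ν r) *
          ENNReal.ofReal ((ψ p)⁻¹)) := by rw [hWTN]
    _ = Kconst d * (ENNReal.ofReal ((ψ p)⁻¹) * Xf) * ENNReal.ofReal (t ^ ((d:ℝ)/r) / ν r) := by
        ring
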